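/- Let E be a pseudo effect algebra satisfying (RDP) and let m₁,…,mₙ be Jordan signed measures on E. Then for every x ∈ E, (⋁_{i=1}^n m_i)(x) = sup { m₁(x₁)+⋯+mₙ(xₙ) : x = x₁+⋯+xₙ, x₁,…,xₙ ∈ E } and (⋀_{i=1}^n m_i)(x) = inf { m₁(x₁)+⋯+mₙ(xₙ) : x = x₁+⋯+xₙ, x₁,…,xₙ ∈ E }, where ⋁ and ⋀ are taken in the lattice-ordered group J(E). -/
import Mathlib


universe u v

/-- A pseudo effect algebra: a partial algebra `(E; +, 0, 1)` with a partially defined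
binary operation (modelled as `E → E → Option E`) satisfying (i)-(iv). -/
structure PseudoEffectAlgebra (E : Type u) where
  add : E → E → Option E
  zero : E
  one : E
  /-- (i) `a+b` and `(a+b)+c` exist iff `b+c` and `a+(b+c)` exist, and then they are equal. -/
  assoc : ∀ a b c x : E,
    (∃ ab, add a b = some ab ∧ add ab c = some x) ↔
    (∃ bc, add b c = some bc ∧ add a bc = some x)
  /-- (ii) there is exactly one `d` with `a + d = 1`. -/
  rinv : ∀ a : E, ∃! d, add a d = some one
  /-- (ii) there is exactly one `e` with `e + a = 1`. -/
  linv : ∀ a : E, ∃! e, add e a = some one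
  /-- (iii) if `a+b` exists there are `d, e` with `a+b = d+a = b+e`. -/
  com_ex : ∀ a b ab : E, add a b = some ab →
    (∃ d, add d a = some ab) ∧ (∃ e, add b e = some ab)
  /-- (iv) if `1 + a` exists then `a = 0`. -/
  one_add : ∀ a x : E, add one a = some x → a = zero
  /-- (iv) if `a + 1` exists then `a = 0`. -/
  add_one : ∀ a x : E, add a one = some x → a = zero

namespace PseudoEffectAlgebra

variable {E : Type u}

/-- `a ≤ b` iff `a + c = b` for some `c`. -/
def le (P : PseudoEffectAlgebra E) (a b : E) : Prop := ∃ c, P.add a c = some b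

/-- The Riesz Decomposition Property (RDP). -/
def RDP (P : PseudoEffectAlgebra E) : Prop :=
  ∀ a₁ a₂ b₁ b₂ x : E, P.add a₁ a₂ = some x → P.add b₁ b₂ = some x →
    ∃ d₁ d₂ d₃ d₄, P.add d₁ d₂ = some a₁ ∧ P.add d₃ d₄ = some a₂ ∧
      P.add d₁ d₃ = some b₁ ∧ P.add d₂ d₄ = some b₂

/-- A pseudo effect algebra with commutative `+` is an effect algebra. -/
def Commutative (P : PseudoEffectAlgebra E) : Prop := ∀ a b : E, P.add a b = P.add b a

/-- A signed measure: additive on existing sums. -/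
def IsSignedMeasure (P : PseudoEffectAlgebra E) (m : E → ℝ) : Prop :=
  ∀ a b ab : E, P.add a b = some ab → m ab = m a + m b

/-- A measure: a nonnegative signed measure. -/
def IsMeasure (P : PseudoEffectAlgebra E) (m : E → ℝ) : Prop :=
  IsSignedMeasure P m ∧ ∀ a : E, 0 ≤ m a

/-- A state: a normalized measure. -/
def IsState (P : PseudoEffectAlgebra E) (s : E → ℝ) : Prop :=
  IsMeasure P s ∧ s P.one = 1

/-- A Jordan signed measure: a difference of two measures. -/
def IsJordan (P : PseudoEffectAlgebra E) (m : E → ℝ) : Prop :=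
  ∃ m₁ m₂ : E → ℝ, IsMeasure P m₁ ∧ IsMeasure P m₂ ∧ m = m₁ - m₂

/-- `J(E)`, the set of Jordan signed measures. -/
def Jordan (P : PseudoEffectAlgebra E) : Set (E → ℝ) := {m | IsJordan P m}

/-- `M⁺(E)`, the set of measures. -/
def Measures (P : PseudoEffectAlgebra E) : Set (E → ℝ) := {m | IsMeasure P m}

/-- `S(E)`, the set of states. -/
def States (P : PseudoEffectAlgebra E) : Set (E → ℝ) := {s | IsState P s}

/-- `sup` is the least upper bound of `S` computed within the subset `J`
(with the pointwise order `≤⁺` on functions). -/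
def IsLubIn (J S : Set (E → ℝ)) (sup : E → ℝ) : Prop :=
  sup ∈ J ∧ (∀ m ∈ S, m ≤ sup) ∧ ∀ b ∈ J, (∀ m ∈ S, m ≤ b) → sup ≤ b

/-- `inf` is the greatest lower bound of `S` computed within the subset `J`. -/
def IsGlbIn (J S : Set (E → ℝ)) (inf : E → ℝ) : Prop :=
  inf ∈ J ∧ (∀ m ∈ S, inf ≤ m) ∧ ∀ b ∈ J, (∀ m ∈ S, b ≤ m) → b ≤ inf

/-- `SumList P [x₁, …, xₙ] x` means the sum `x₁ + ⋯ + xₙ` is defined in `E` and equals `x`. -/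
inductive SumList (P : PseudoEffectAlgebra E) : List E → E → Prop
  | single (a : E) : SumList P [a] a
  | cons {l : List E} {b : E} (a ab : E) :
      SumList P l b → P.add a b = some ab → SumList P (a :: l) ab

/-- A face of a convex set `K`: a convex extreme subset. -/
def IsFace (K F : Set (E → ℝ)) : Prop := Convex ℝ F ∧ IsExtreme ℝ K F

/-- The complementary face `F'` of `F` in `K`: the union of all faces of `K` disjoint from `F`. -/
def ComplFace (K F : Set (E → ℝ)) : Set (E → ℝ) :=
  ⋃₀ {G | IsFace K G ∧ Disjoint G F}

/-- The cone `V(F) = {α s : α ≥ 0, s ∈ F}` generated by a subset `F` of the state space. -/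
def VCone (F : Set (E → ℝ)) : Set (E → ℝ) :=
  {m | ∃ α : ℝ, 0 ≤ α ∧ ∃ s ∈ F, m = α • s}

/-- `V(F)` is `∨`-closed: for every chain in `V(F)` bounded above in `M⁺(E)`,
the supremum taken in `J(E)` belongs to `V(F)`. -/
def VeeClosed (P : PseudoEffectAlgebra E) (F : Set (E → ℝ)) : Prop :=
  ∀ C : Set (E → ℝ), C ⊆ VCone F → C.Nonempty → IsChain (· ≤ ·) C →
    (∃ b ∈ Measures P, ∀ m ∈ C, m ≤ b) →
    ∀ msup : E → ℝ, IsLubIn (Jordan P) C msup → msup ∈ VCone F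

/-- `a` is the supremum of `S ⊆ E` in the partial order of `E`. -/
def IsLUBe (P : PseudoEffectAlgebra E) (S : Set E) (a : E) : Prop :=
  (∀ x ∈ S, P.le x a) ∧ ∀ b : E, (∀ x ∈ S, P.le x b) → P.le a b

/-- A σ-additive (signed) measure. -/
def SigmaAdditive (P : PseudoEffectAlgebra E) (m : E → ℝ) : Prop :=
  ∀ (a_ : ℕ → E) (a : E), (∀ n : ℕ, P.le (a_ n) (a_ (n + 1))) →
    IsLUBe P (Set.range a_) a →
    Filter.Tendsto (fun n => m (a_ n)) Filter.atTop (nhds (m a))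

/-- An upwards continuous (signed) measure: `{a_t} ↑ a` implies `{m(a_t)} ↑ m(a)`. -/
def UpwardsContinuous (P : PseudoEffectAlgebra E) (m : E → ℝ) : Prop :=
  ∀ {T : Type v} [Nonempty T] (a_ : T → E) (a : E),
    (∀ s t : T, ∃ r : T, P.le (a_ s) (a_ r) ∧ P.le (a_ t) (a_ r)) →
    IsLUBe P (Set.range a_) a →
    IsLUB (Set.range fun t => m (a_ t)) (m a)

/-- The system `{a_t}_{t ∈ T}` is summable with sum `a`: every finite subsystem
(coded by a duplicate-free list) has a sum in `E`, and `a` is the supremum of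
all such finite partial sums. -/
def IsSummableSum (P : PseudoEffectAlgebra E) {T : Type v} (a_ : T → E) (a : E) : Prop :=
  (∀ l : List T, l ≠ [] → l.Nodup → ∃ x : E, SumList P (l.map a_) x) ∧
  IsLUBe P {x : E | ∃ l : List T, l.Nodup ∧ SumList P (l.map a_) x} a

/-- A completely additive (signed) measure: whenever `a = Σ_{t∈T} a_t`, the value `m a`
is the supremum of the finite partial sums `Σ_{t∈F} m (a_t)`. -/
def CompletelyAdditive (P : PseudoEffectAlgebra E) (m : E → ℝ) : Prop :=
  ∀ {T : Type v} (a_ : T → E) (a : E), IsSummableSum P a_ a →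
    IsLUB {r : ℝ | ∃ l : List T, l.Nodup ∧ r = (l.map (fun t => m (a_ t))).sum} (m a)

/-- An ideal of a pseudo effect algebra. -/
def IsIdeal (P : PseudoEffectAlgebra E) (I : Set E) : Prop :=
  P.zero ∈ I ∧
  (∀ a ∈ I, ∀ b ∈ I, ∀ ab : E, P.add a b = some ab → ab ∈ I) ∧
  (∀ a b : E, b ∈ I → P.le a b → a ∈ I)

/-- A normal ideal: `a + I = I + a` for all `a`. -/
def IsNormalIdeal (P : PseudoEffectAlgebra E) (I : Set E) : Prop :=
  IsIdeal P I ∧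
  ∀ a : E, {x : E | ∃ b ∈ I, P.add a b = some x} = {x : E | ∃ b ∈ I, P.add b a = some x}

/-- `m₁ ≪_ε m₂`: `m₁` is `m₂`-continuous. -/
def EpsCont (m₁ m₂ : E → ℝ) : Prop :=
  ∀ ε : ℝ, 0 < ε → ∃ δ : ℝ, 0 < δ ∧ ∀ a : E, m₂ a < δ → m₁ a < ε

/-- `m₁ ≪ m₂`: `m₁` is absolutely continuous with respect to `m₂`. -/
def AbsCont (m₁ m₂ : E → ℝ) : Prop := ∀ a : E, m₂ a = 0 → m₁ a = 0

/-- `a⁻ = 1 ⧵ a`, the unique element with `a⁻ + a = 1`. -/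
noncomputable def lneg (P : PseudoEffectAlgebra E) (a : E) : E := (P.linv a).exists.choose

/-- `a` is central (Boolean): `a ∧ a⁻ = 0`. -/
def IsCentral (P : PseudoEffectAlgebra E) (a : E) : Prop :=
  ∀ x : E, P.le x a → P.le x (lneg P a) → x = P.zero

/-- `E` is monotone σ-complete. -/
def MonotoneSigmaComplete (P : PseudoEffectAlgebra E) : Prop :=
  ∀ a_ : ℕ → E, (∀ n : ℕ, P.le (a_ n) (a_ (n + 1))) → ∃ a : E, IsLUBe P (Set.range a_) a

/-- `m ⊥ t`: there is `a ∈ E` with `t a = 0` and `m a⁻ = 0`. -/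
def Perp (P : PseudoEffectAlgebra E) (m t : E → ℝ) : Prop :=
  ∃ a : E, t a = 0 ∧ m (lneg P a) = 0

/-- Unique decomposition of every measure `m` as `m = m₁ + m₂` with `m₁` a measure
satisfying `Q` and `m₂` a measure singular with respect to the measures satisfying `Q`. -/
def MeasDecomp (P : PseudoEffectAlgebra E) (Q : (E → ℝ) → Prop) : Prop :=
  ∀ m ∈ Measures P, ∃ m₁ m₂ : E → ℝ,
    (IsMeasure P m₁ ∧ Q m₁) ∧ IsMeasure P m₂ ∧
    (∀ t : E → ℝ, IsMeasure P t → Q t → t ≤ m₂ → t = 0) ∧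
    m = m₁ + m₂ ∧
    (∀ m₁' m₂' : E → ℝ, (IsMeasure P m₁' ∧ Q m₁') → IsMeasure P m₂' →
      (∀ t : E → ℝ, IsMeasure P t → Q t → t ≤ m₂' → t = 0) →
      m = m₁' + m₂' → m₁' = m₁ ∧ m₂' = m₂)

/-- Unique convex decomposition of every state `s` as `s = λ₁ s₁ + λ₂ s₂` with `s₁` a state
satisfying `Q` and `s₂` a state such that `α s' ≤⁺ s₂` with `s'` a state satisfying `Q`
and `α ≥ 0` forces `α = 0`. -/
def StateDecomp (P : PseudoEffectAlgebra E) (Q : (E → ℝ) → Prop) : Prop :=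
  ∀ s ∈ States P, ∃ l₁ l₂ : ℝ, 0 ≤ l₁ ∧ 0 ≤ l₂ ∧ l₁ + l₂ = 1 ∧
    ∃ s₁ s₂ : E → ℝ,
      (IsState P s₁ ∧ Q s₁) ∧ IsState P s₂ ∧
      (∀ (s' : E → ℝ) (α : ℝ), IsState P s' → Q s' → 0 ≤ α → α • s' ≤ s₂ → α = 0) ∧
      s = l₁ • s₁ + l₂ • s₂ ∧
      (∀ (μ₁ μ₂ : ℝ) (s₁' s₂' : E → ℝ), 0 ≤ μ₁ → 0 ≤ μ₂ → μ₁ + μ₂ = 1 →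
        (IsState P s₁' ∧ Q s₁') → IsState P s₂' →
        (∀ (s' : E → ℝ) (α : ℝ), IsState P s' → Q s' → 0 ≤ α → α • s' ≤ s₂' → α = 0) →
        s = μ₁ • s₁' + μ₂ • s₂' →
        μ₁ = l₁ ∧ μ₂ = l₂ ∧ (l₁ ≠ 0 → s₁' = s₁) ∧ (l₂ ≠ 0 → s₂' = s₂))

section Aux

variable (P : PseudoEffectAlgebra E)

lemma one_add_zero' : P.add P.one P.zero = some P.one := by
  obtain ⟨d, hd, -⟩ := P.rinv P.one
  have h := P.one_add d P.one hd
  rwa [h] at hd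

lemma zero_add_one' : P.add P.zero P.one = some P.one := by
  obtain ⟨e, he, -⟩ := P.linv P.one
  have h := P.add_one e P.one he
  rwa [h] at he

lemma zero_add' (a : E) : P.add P.zero a = some a := by
  obtain ⟨d, hd, -⟩ := P.rinv a
  obtain ⟨ab, h1, h2⟩ := (P.assoc P.zero a d P.one).mpr ⟨P.one, hd, P.zero_add_one'⟩
  obtain ⟨e, he, hu⟩ := P.linv d
  have : ab = a := (hu ab h2).trans (hu a hd).symm
  rwa [this] at h1

lemma add_zero' (a : E) : P.add a P.zero = some a := by
  obtain ⟨e, he, -⟩ := P.linv a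
  obtain ⟨bc, h1, h2⟩ := (P.assoc e a P.zero P.one).mp ⟨P.one, he, P.one_add_zero'⟩
  obtain ⟨d, hd, hu⟩ := P.rinv e
  have : bc = a := (hu bc h2).trans (hu a he).symm
  rwa [this] at h1

lemma signed_zero {m : E → ℝ} (hm : IsSignedMeasure P m) : m P.zero = 0 := by
  have := hm P.zero P.zero P.zero (P.zero_add' P.zero); linarith

lemma IsJordan.signed {m : E → ℝ} (h : IsJordan P m) : IsSignedMeasure P m := by
  obtain ⟨p, q, hp, hq, rfl⟩ := h
  intro a b ab hab
  have h1 := hp.1 a b ab hab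
  have h2 := hq.1 a b ab hab
  simp only [Pi.sub_apply]; linarith

lemma not_sumList_nil {c : E} (h : SumList P [] c) : False := by cases h

lemma SumList.cons_inv {a : E} {l : List E} {c : E} (h : SumList P (a :: l) c) :
    (l = [] ∧ c = a) ∨ ∃ d, SumList P l d ∧ P.add a d = some c := by
  cases h with
  | single _ => exact .inl ⟨rfl, rfl⟩
  | cons _ _ h1 hadd => exact .inr ⟨_, h1, hadd⟩

lemma SumList.single_inv {a c : E} (h : SumList P [a] c) : c = a := by
  rcases h.cons_inv P with ⟨-, h⟩ | ⟨d, hd, -⟩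
  · exact h
  · exact absurd hd (P.not_sumList_nil)

lemma SumList.map_sum {l : List E} {c : E} (h : SumList P l c) {m : E → ℝ}
    (hm : IsSignedMeasure P m) : m c = (l.map m).sum := by
  induction h with
  | single a => simp
  | cons a ab h1 hab ih => simp only [List.map_cons, List.sum_cons, ← ih]; exact hm _ _ _ hab

lemma SumList.combine {a b : E} {t : List E} {c : E} (h : SumList P (a :: b :: t) c) :
    ∃ ab, P.add a b = some ab ∧ SumList P (ab :: t) c := by
  rcases h.cons_inv P with ⟨h1, -⟩ | ⟨d, hd, hadd⟩
  · exact absurd h1 (by simp)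
  rcases hd.cons_inv P with ⟨rfl, rfl⟩ | ⟨e, he, hadd2⟩
  · exact ⟨c, hadd, .single c⟩
  · obtain ⟨ab, h1, h2⟩ := (P.assoc a b e c).mpr ⟨d, hadd2, hadd⟩
    exact ⟨ab, h1, .cons ab c he h2⟩

lemma SumList.split {a b ab : E} {t : List E} {c : E} (hab : P.add a b = some ab)
    (h : SumList P (ab :: t) c) : SumList P (a :: b :: t) c := by
  rcases h.cons_inv P with ⟨rfl, rfl⟩ | ⟨e, he, hadd⟩
  · exact .cons _ _ (.single b) hab
  · obtain ⟨be, h1, h2⟩ := (P.assoc a b e c).mp ⟨ab, hab, hadd⟩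
    exact .cons a c (.cons b be he h1) h2

lemma SumList.append {l₁ l₂ : List E} {a b c : E} (h₁ : SumList P l₁ a) (h₂ : SumList P l₂ b)
    (hab : P.add a b = some c) : SumList P (l₁ ++ l₂) c := by
  induction h₁ generalizing c with
  | single a' => exact .cons a' c h₂ hab
  | cons a' ab' h1 hadd ih =>
    obtain ⟨db, hdb, h2⟩ := (P.assoc a' _ b c).mp ⟨ab', hadd, hab⟩
    exact .cons a' c (ih hdb) h2

lemma swapHead {u v : E} {t : List E} {c : E} (h : SumList P (u :: v :: t) c) :
    ∃ v', (∀ m : E → ℝ, IsSignedMeasure P m → m v' = m v) ∧ SumList P (v' :: u :: t) c := by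
  obtain ⟨w, hw, h2⟩ := h.combine P
  obtain ⟨⟨d, hd⟩, -⟩ := P.com_ex u v w hw
  refine ⟨d, fun m hm => ?_, SumList.split P hd h2⟩
  have h1 := hm u v w hw
  have h3 := hm d u w hd
  linarith

lemma moveFront {y c : E} (l r : List E) (h : SumList P (l ++ y :: r) c) :
    ∃ y', (∀ m : E → ℝ, IsSignedMeasure P m → m y' = m y) ∧ SumList P (y' :: (l ++ r)) c := by
  induction l generalizing c with
  | nil => exact ⟨y, fun _ _ => rfl, h⟩
  | cons a l ih =>
    rcases (SumList.cons_inv P h) with ⟨h1, -⟩ | ⟨d, hd, hadd⟩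
    · exact absurd h1 (by simp)
    obtain ⟨y₁, hy₁, h2⟩ := ih hd
    obtain ⟨y₂, hy₂, h4⟩ := swapHead P (.cons a c h2 hadd)
    exact ⟨y₂, fun m hm => (hy₂ m hm).trans (hy₁ m hm), h4⟩

lemma sumList_zeros : ∀ k : ℕ, SumList P (List.ofFn fun _ : Fin (k + 1) => P.zero) P.zero := by
  intro k
  induction k with
  | zero => exact .single P.zero
  | succ k ih =>
    rw [List.ofFn_succ]
    exact .cons P.zero P.zero ih (P.zero_add' P.zero)

lemma sumList_indicator : ∀ (k : ℕ) (j : Fin (k + 1)) (x : E),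
    SumList P (List.ofFn fun i => if i = j then x else P.zero) x := by
  intro k
  induction k with
  | zero =>
    intro j x
    have hj : j = 0 := Fin.fin_one_eq_zero j
    subst hj
    simpa using SumList.single x
  | succ k ih =>
    intro j x
    rw [List.ofFn_succ]
    cases j using Fin.cases with
    | zero =>
      have hhead : (if (0 : Fin (k+2)) = 0 then x else P.zero) = x := if_pos rfl
      have htail : (List.ofFn fun i : Fin (k+1) => if i.succ = (0 : Fin (k+2)) then x else P.zero)
          = List.ofFn fun _ : Fin (k+1) => P.zero := by
        refine congrArg List.ofFn (funext fun i => ?_)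
        simp [Fin.succ_ne_zero]
      rw [hhead, htail]
      exact .cons x x (P.sumList_zeros k) (P.add_zero' x)
    | succ j =>
      have hhead : (if (0 : Fin (k+2)) = j.succ then x else P.zero) = P.zero := by
        simp [(Fin.succ_ne_zero j).symm]
      have htail : (List.ofFn fun i : Fin (k+1) => if i.succ = j.succ then x else P.zero)
          = List.ofFn fun i : Fin (k+1) => if i = j then x else P.zero := by
        refine congrArg List.ofFn (funext fun i => ?_)
        simp [Fin.succ_inj]
      rw [hhead, htail]
      exact .cons P.zero x (ih j x) (P.zero_add' x)

lemma merge : ∀ (k : ℕ) (xs ys : Fin (k + 1) → E) (c : E),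
    SumList P (List.ofFn xs ++ List.ofFn ys) c →
    ∃ zs : Fin (k + 1) → E, SumList P (List.ofFn zs) c ∧
      ∀ (i : Fin (k + 1)) (m : E → ℝ), IsSignedMeasure P m →
        m (zs i) = m (xs i) + m (ys i) := by
  intro k
  induction k with
  | zero =>
    intro xs ys c h
    have h' : SumList P [xs 0, ys 0] c := by simpa using h
    obtain ⟨ab, hab, h2⟩ := h'.combine P
    have hc : c = ab := h2.single_inv P
    subst hc
    refine ⟨fun _ => c, by simpa using SumList.single c, fun i m hm => ?_⟩
    have hi : i = 0 := Fin.fin_one_eq_zero i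
    subst hi
    exact hm _ _ _ hab
  | succ k ih =>
    intro xs ys c h
    rw [List.ofFn_succ, List.ofFn_succ (f := ys), List.cons_append] at h
    rcases h.cons_inv P with ⟨h1, -⟩ | ⟨d, hd, hadd⟩
    · exact absurd h1 (by simp)
    obtain ⟨y', hy', h2⟩ := P.moveFront _ _ hd
    obtain ⟨z0, hz0, h4⟩ := (SumList.cons (P := P) (xs 0) c h2 hadd).combine P
    rcases h4.cons_inv P with ⟨h5, -⟩ | ⟨e, h5, hadd2⟩
    · exact absurd h5 (by simp [List.ofFn_succ])
    obtain ⟨zs', h6, hvals⟩ := ih (fun i => xs i.succ) (fun i => ys i.succ) e h5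
    refine ⟨Fin.cons z0 zs', ?_, ?_⟩
    · rw [List.ofFn_succ]
      simp only [Fin.cons_zero, Fin.cons_succ]
      exact .cons z0 c h6 hadd2
    · intro i m hm
      cases i using Fin.cases with
      | zero =>
        simp only [Fin.cons_zero]
        have := hm _ _ _ hz0
        rw [this, hy' m hm]
      | succ j =>
        simp only [Fin.cons_succ]
        exact hvals j m hm

lemma refine : ∀ (k : ℕ) (zs : Fin (k + 1) → E) (a b c : E), P.RDP →
    P.add a b = some c → SumList P (List.ofFn zs) c →
    ∃ us vs : Fin (k + 1) → E, SumList P (List.ofFn us) a ∧ SumList P (List.ofFn vs) b ∧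
      ∀ i, P.add (us i) (vs i) = some (zs i) := by
  intro k
  induction k with
  | zero =>
    intro zs a b c hRDP hab h
    have hc : c = zs 0 := by
      have h' : SumList P [zs 0] c := by simpa using h
      exact h'.single_inv P
    subst hc
    refine ⟨fun _ => a, fun _ => b, by simpa using SumList.single a,
      by simpa using SumList.single b, fun i => by rw [Fin.fin_one_eq_zero i]; exact hab⟩
  | succ k ih =>
    intro zs a b c hRDP hab h
    rw [List.ofFn_succ] at h
    rcases h.cons_inv P with ⟨h1, -⟩ | ⟨d, hd, hadd⟩
    · exact absurd h1 (by simp)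
    obtain ⟨d₁, d₂, d₃, d₄, h1, h2, h3, h4⟩ := hRDP a b (zs 0) d c hab hadd
    obtain ⟨us', vs', hu, hv, hi⟩ := ih (fun i => zs i.succ) d₂ d₄ d hRDP h4 hd
    refine ⟨Fin.cons d₁ us', Fin.cons d₃ vs', ?_, ?_, ?_⟩
    · rw [List.ofFn_succ]
      simp only [Fin.cons_zero, Fin.cons_succ]
      exact .cons d₁ a hu h1
    · rw [List.ofFn_succ]
      simp only [Fin.cons_zero, Fin.cons_succ]
      exact .cons d₃ b hv h2
    · intro i
      cases i using Fin.cases with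
      | zero => simpa using h3
      | succ j => simpa using hi j

lemma lub_eq (hRDP : P.RDP) (k : ℕ) (m_ : Fin (k + 1) → E → ℝ)
    (hm : ∀ i, m_ i ∈ Jordan P) (msup : E → ℝ)
    (hlub : IsLubIn (Jordan P) (Set.range m_) msup) (x : E) :
    msup x = sSup {r : ℝ | ∃ xs : Fin (k + 1) → E,
      SumList P (List.ofFn xs) x ∧ r = ∑ i, m_ i (xs i)} := by
  set S : E → Set ℝ := fun y => {r : ℝ | ∃ xs : Fin (k + 1) → E,
      SumList P (List.ofFn xs) y ∧ r = ∑ i, m_ i (xs i)} with hSdef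
  choose p q hp hq hpq using hm
  have hms : ∀ i, IsSignedMeasure P (m_ i) :=
    fun i => IsJordan.signed P ⟨p i, q i, hp i, hq i, hpq i⟩
  set Pbig : E → ℝ := fun y => ∑ i, p i y with hPdef
  have hPs : IsSignedMeasure P Pbig := by
    intro a b ab h
    simp only [hPdef, ← Finset.sum_add_distrib]
    exact Finset.sum_congr rfl fun i _ => (hp i).1 a b ab h
  have hmem : ∀ (j : Fin (k + 1)) (y : E), m_ j y ∈ S y := by
    intro j y
    refine ⟨fun i => if i = j then y else P.zero, P.sumList_indicator k j y, ?_⟩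
    have h : (∑ i, m_ i (if i = j then y else P.zero)) = m_ j y := by
      rw [Finset.sum_eq_single j (fun i _ hij => by rw [if_neg hij]; exact P.signed_zero (hms i))
        (fun h => absurd (Finset.mem_univ j) h), if_pos rfl]
    exact h.symm
  have hbdd : ∀ y : E, BddAbove (S y) := by
    intro y
    refine ⟨Pbig y, fun r hr => ?_⟩
    obtain ⟨xs, hxs, rfl⟩ := hr
    have h1 : Pbig y = ∑ i, Pbig (xs i) := by
      have h := hxs.map_sum P hPs
      rwa [List.map_ofFn, List.sum_ofFn] at h
    rw [h1]
    refine Finset.sum_le_sum fun i _ => ?_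
    have h2 : m_ i (xs i) ≤ p i (xs i) := by
      have h := congrFun (hpq i) (xs i)
      simp only [Pi.sub_apply] at h
      have := (hq i).2 (xs i)
      linarith
    have h3 : p i (xs i) ≤ Pbig (xs i) :=
      Finset.single_le_sum (fun j _ => (hp j).2 (xs i)) (Finset.mem_univ i)
    linarith
  have hne : ∀ y : E, (S y).Nonempty := fun y => ⟨m_ 0 y, hmem 0 y⟩
  set s : E → ℝ := fun y => sSup (S y) with hsdef
  have hub : ∀ (i : Fin (k + 1)) (y : E), m_ i y ≤ s y :=
    fun i y => le_csSup (hbdd y) (hmem i y)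
  have hsadd : IsSignedMeasure P s := by
    intro a b c habc
    have hle : s c ≤ s a + s b := by
      refine csSup_le (hne c) ?_
      rintro r ⟨zs, hzs, rfl⟩
      obtain ⟨us, vs, hu, hv, hi⟩ := P.refine k zs a b c hRDP habc hzs
      have h1 : ∑ i, m_ i (zs i) = (∑ i, m_ i (us i)) + ∑ i, m_ i (vs i) := by
        rw [← Finset.sum_add_distrib]
        exact Finset.sum_congr rfl fun i _ => (hms i) _ _ _ (hi i)
      have h2 : (∑ i, m_ i (us i)) ≤ s a := le_csSup (hbdd a) ⟨us, hu, rfl⟩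
      have h3 : (∑ i, m_ i (vs i)) ≤ s b := le_csSup (hbdd b) ⟨vs, hv, rfl⟩
      rw [h1]; linarith
    have hge : s a + s b ≤ s c := by
      have key : ∀ r₁ ∈ S a, ∀ r₂ ∈ S b, r₁ + r₂ ≤ s c := by
        rintro r₁ ⟨xs, hxs, rfl⟩ r₂ ⟨ys, hys, rfl⟩
        have happ := SumList.append P hxs hys habc
        obtain ⟨zs, hzs, hvals⟩ := P.merge k xs ys c happ
        have h1 : (∑ i, m_ i (xs i)) + ∑ i, m_ i (ys i) = ∑ i, m_ i (zs i) := by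
          rw [← Finset.sum_add_distrib]
          exact Finset.sum_congr rfl fun i _ => (hvals i (m_ i) (hms i)).symm
        rw [h1]
        exact le_csSup (hbdd c) ⟨zs, hzs, rfl⟩
      have h2 : ∀ r₂ ∈ S b, r₂ ≤ s c - s a := by
        intro r₂ hr₂
        have h3 : s a ≤ s c - r₂ :=
          csSup_le (hne a) (fun r₁ hr₁ => by linarith [key r₁ hr₁ r₂ hr₂])
        linarith
      have h4 := csSup_le (hne b) h2
      linarith
    linarith
  have hsJ : s ∈ Jordan P := by
    refine ⟨fun y => s y - m_ 0 y + p 0 y, q 0, ⟨?_, ?_⟩, hq 0, ?_⟩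
    · intro a b ab h
      have h1 := hsadd a b ab h
      have h2 := (hms 0) a b ab h
      have h3 := (hp 0).1 a b ab h
      dsimp only; linarith
    · intro y
      have h1 := hub 0 y
      have h2 := (hp 0).2 y
      dsimp only; linarith
    · funext y
      have h := congrFun (hpq 0) y
      simp only [Pi.sub_apply] at h ⊢
      linarith
  obtain ⟨hJ, hub', hleast⟩ := hlub
  refine le_antisymm ?_ ?_
  · have h : msup ≤ s := hleast s hsJ (by rintro m ⟨i, rfl⟩; exact fun y => hub i y)
    exact h x
  · refine csSup_le (hne x) ?_
    rintro r ⟨xs, hxs, rfl⟩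
    have hmsupS := IsJordan.signed P hJ
    have h1 : msup x = ∑ i, msup (xs i) := by
      have h := hxs.map_sum P hmsupS
      rwa [List.map_ofFn, List.sum_ofFn] at h
    rw [h1]
    exact Finset.sum_le_sum fun i _ => hub' (m_ i) ⟨i, rfl⟩ (xs i)

lemma neg_mem_jordan {m : E → ℝ} (h : m ∈ Jordan P) : -m ∈ Jordan P := by
  obtain ⟨p, q, hp, hq, rfl⟩ := h
  exact ⟨q, p, hq, hp, by funext y; simp only [Pi.neg_apply, Pi.sub_apply]; ring⟩

end Aux

end PseudoEffectAlgebra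

open PseudoEffectAlgebra

/-- For finitely many Jordan signed measures `m₁, …, mₙ` on a pseudo
effect algebra with (RDP): `(⋁ᵢ mᵢ)(x) = sup { m₁(x₁)+⋯+mₙ(xₙ) : x = x₁+⋯+xₙ }` and
`(⋀ᵢ mᵢ)(x) = inf { m₁(x₁)+⋯+mₙ(xₙ) : x = x₁+⋯+xₙ }`, where `⋁, ⋀` are taken in `J(E)`. -/
theorem stmt2 {E : Type u} (P : PseudoEffectAlgebra E) (hRDP : P.RDP)
    (n : ℕ) (hn : 0 < n) (m_ : Fin n → (E → ℝ)) (hm : ∀ i, m_ i ∈ Jordan P) :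
    (∀ msup : E → ℝ, IsLubIn (Jordan P) (Set.range m_) msup →
      ∀ x : E, msup x = sSup {r : ℝ |
        ∃ xs : Fin n → E, SumList P (List.ofFn xs) x ∧ r = ∑ i, m_ i (xs i)}) ∧
    (∀ minf : E → ℝ, IsGlbIn (Jordan P) (Set.range m_) minf →
      ∀ x : E, minf x = sInf {r : ℝ |
        ∃ xs : Fin n → E, SumList P (List.ofFn xs) x ∧ r = ∑ i, m_ i (xs i)}) := by
  obtain ⟨k, rfl⟩ : ∃ k, n = k + 1 := ⟨n - 1, (Nat.succ_pred_eq_of_pos hn).symm⟩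
  constructor
  · intro msup hlub x
    exact P.lub_eq hRDP k m_ hm msup hlub x
  · intro minf hglb x
    set m' : Fin (k + 1) → E → ℝ := fun i => -(m_ i) with hm'def
    have hm' : ∀ i, m' i ∈ Jordan P := fun i => P.neg_mem_jordan (hm i)
    have hlub : IsLubIn (Jordan P) (Set.range m') (-minf) := by
      obtain ⟨hJ, hlb, hgreat⟩ := hglb
      refine ⟨P.neg_mem_jordan hJ, ?_, ?_⟩
      · rintro m ⟨i, rfl⟩
        exact neg_le_neg (hlb (m_ i) ⟨i, rfl⟩)
      · intro b hb hub
        have h1 : -b ≤ minf := by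
          refine hgreat (-b) (P.neg_mem_jordan hb) ?_
          rintro m ⟨i, rfl⟩
          exact neg_le.mp (hub (m' i) ⟨i, rfl⟩)
        exact neg_le_of_neg_le h1
    have h := P.lub_eq hRDP k m' hm' (-minf) hlub x
    have hset : {r : ℝ | ∃ xs : Fin (k + 1) → E, SumList P (List.ofFn xs) x ∧
          r = ∑ i, m' i (xs i)}
        = -{r : ℝ | ∃ xs : Fin (k + 1) → E, SumList P (List.ofFn xs) x ∧
          r = ∑ i, m_ i (xs i)} := by
      ext r
      rw [Set.mem_neg]
      constructor
      · rintro ⟨xs, hxs, rfl⟩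
        exact ⟨xs, hxs, by simp [hm'def]⟩
      · rintro ⟨xs, hxs, hr⟩
        exact ⟨xs, hxs, by simp [hm'def]; linarith⟩
    rw [hset] at h
    rw [Real.sInf_def]
    have h2 : (-minf) x = -(minf x) := rfl
    rw [h2] at h
    linarith
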